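/- For every (t,s) ∈ S with (t,s) ≠ (0,0) there exists a unique λ > 0 such that (t/λ, s/λ) lies on the curve Γ_g; that is, every ray from the origin contained in the cone S meets the graph of g in exactly one point. In particular there is a well-defined function F : S ∖ {0} → (0,∞) which is positively homogeneous of degree one and identically 1 on Γ_g. -/

import Mathlib

/-!
Write `gfunPersp t x = x * gfun (t / x)` for the perspective of `gfun`, defined for `x ≥ |t|`.
A point `(t, s)` reaches the graph of `gfun` after division by `λ > 0` exactly when `λ ≥ |t|`
and `gfunPersp t λ = s`. Since `gfun' u = -arccos u / π`, the derivative of `gfunPersp t` is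
`gfun u - u gfun' u = √(1 - u²) / π > 0` with `u = t / x`, so `gfunPersp t` is strictly
increasing on `[|t|, ∞)`. It starts at `gfunPersp t |t| = max 0 (-t)` and grows at least
linearly, so by the intermediate value theorem it takes every value `s ≥ max 0 (-t)` exactly
once. The scale `λ` is then a gauge: homogeneity and the value `1` on the graph follow from
uniqueness.
-/

open Real Set

noncomputable def gfun (t : ℝ) : ℝ := (Real.sqrt (1 - t^2) - t * Real.arccos t) / Real.pi

def Scone : Set (ℝ × ℝ) := {p | max 0 (-p.1) ≤ p.2}

theorem HasDerivAt.perspective {f : ℝ → ℝ} {f' t x : ℝ} (hf : HasDerivAt f f' (t / x))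
    (hx : x ≠ 0) : HasDerivAt (fun y => y * f (t / y)) (f (t / x) - t / x * f') x := by
  have hdiv : HasDerivAt (fun y => t / y) (-t / x ^ 2) x := by
    simpa [div_eq_mul_inv] using (hasDerivAt_inv hx).const_mul t
  refine ((hasDerivAt_id x).mul (hf.comp x hdiv)).congr_deriv ?_
  simp only [id, Function.comp_apply]
  field_simp
  ring

lemma continuous_gfun : Continuous gfun := by
  unfold gfun
  fun_prop

lemma hasDerivAt_gfun {u : ℝ} (h1 : -1 < u) (h2 : u < 1) :
    HasDerivAt gfun (-arccos u / π) u := by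
  have hpos : 0 < 1 - u ^ 2 := by nlinarith
  have hsqrt : HasDerivAt (fun t : ℝ => √(1 - t ^ 2)) (-2 * u / (2 * √(1 - u ^ 2))) u := by
    simpa using ((hasDerivAt_pow 2 u).const_sub 1).sqrt hpos.ne'
  have hmul := (hasDerivAt_id u).mul (hasDerivAt_arccos h1.ne' h2.ne)
  refine ((hsqrt.sub hmul).div_const π).congr_deriv ?_
  have hsqrt0 : √(1 - u ^ 2) ≠ 0 := (sqrt_pos.2 hpos).ne'
  simp only [id]
  field_simp
  ring

lemma gfun_neg_one : gfun (-1) = 1 := by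
  simp [gfun, arccos_neg_one, pi_ne_zero]

lemma gfun_one : gfun 1 = 0 := by
  simp [gfun]

lemma one_sub_mul_abs_div_pi_le_gfun {u : ℝ} (hu : |u| ≤ 1) :
    (1 - (1 + π) * |u|) / π ≤ gfun u := by
  have hsqrt : 1 - |u| ≤ √(1 - u ^ 2) := by
    rcases le_total (1 - |u|) 0 with h | h
    · exact h.trans (sqrt_nonneg _)
    · rw [le_sqrt h (by nlinarith [sq_abs u, abs_nonneg u])]
      nlinarith [sq_abs u, abs_nonneg u]
  have harccos : u * arccos u ≤ |u| * π :=
    calc u * arccos u ≤ |u| * arccos u :=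
          mul_le_mul_of_nonneg_right (le_abs_self u) (arccos_nonneg u)
      _ ≤ |u| * π := mul_le_mul_of_nonneg_left (arccos_le_pi u) (abs_nonneg u)
  unfold gfun
  gcongr ?_ / π
  linarith

noncomputable def gfunPersp (t x : ℝ) : ℝ := x * gfun (t / x)

section gfunPersp

variable {t x : ℝ}

lemma hasDerivAt_gfunPersp (h : |t| < x) :
    HasDerivAt (gfunPersp t) (√(1 - (t / x) ^ 2) / π) x := by
  have hx : 0 < x := (abs_nonneg t).trans_lt h
  have hu : |t / x| < 1 := by rwa [abs_div, abs_of_pos hx, div_lt_one hx]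
  obtain ⟨hu1, hu2⟩ := abs_lt.1 hu
  refine ((hasDerivAt_gfun hu1 hu2).perspective hx.ne').congr_deriv ?_
  unfold gfun
  ring

lemma continuousOn_gfunPersp : ContinuousOn (gfunPersp t) (Ici |t|) := by
  refine continuousOn_id.mul (continuous_gfun.comp_continuousOn ?_)
  rcases eq_or_ne t 0 with rfl | ht
  · exact continuousOn_const.congr fun y _ => zero_div y
  · exact continuousOn_const.div continuousOn_id
      fun y hy => ((abs_pos.2 ht).trans_le hy).ne'

lemma strictMonoOn_gfunPersp : StrictMonoOn (gfunPersp t) (Ici |t|) := by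
  refine strictMonoOn_of_deriv_pos (convex_Ici _) continuousOn_gfunPersp fun y hy => ?_
  rw [interior_Ici] at hy
  have hy0 : 0 < y := (abs_nonneg t).trans_lt hy
  have hu : (t / y) ^ 2 < 1 := by
    rwa [sq_lt_one_iff_abs_lt_one, abs_div, abs_of_pos hy0, div_lt_one hy0]
  rw [(hasDerivAt_gfunPersp hy).deriv]
  exact div_pos (sqrt_pos.2 (by linarith)) pi_pos

lemma gfunPersp_abs (t : ℝ) : gfunPersp t |t| = max 0 (-t) := by
  rcases lt_trichotomy t 0 with ht | rfl | ht
  · simp [gfunPersp, abs_of_neg ht, ht.ne, gfun_neg_one, ht.le]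
  · simp [gfunPersp]
  · simp [gfunPersp, abs_of_pos ht, ht.ne', gfun_one, ht.le]

lemma sub_div_pi_le_gfunPersp (h : |t| ≤ x) :
    (x - (1 + π) * |t|) / π ≤ gfunPersp t x := by
  rcases (abs_nonneg t).trans h |>.eq_or_lt with rfl | hx
  · simp [abs_nonpos_iff.1 h, gfunPersp]
  have hu : |t / x| ≤ 1 := by rwa [abs_div, abs_of_pos hx, div_le_one hx]
  calc (x - (1 + π) * |t|) / π = x * ((1 - (1 + π) * |t / x|) / π) := by
        rw [abs_div, abs_of_pos hx]; field_simp
    _ ≤ gfunPersp t x := mul_le_mul_of_nonneg_left (one_sub_mul_abs_div_pi_le_gfun hu) hx.le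

lemma exists_gfunPersp_eq {s : ℝ} (hs : max 0 (-t) ≤ s) :
    ∃ x, |t| ≤ x ∧ gfunPersp t x = s := by
  set M := π * s + (1 + π) * |t|
  have hs0 : 0 ≤ s := (le_max_left _ _).trans hs
  have htM : |t| ≤ M := by nlinarith [pi_pos, abs_nonneg t]
  have hsM : s ≤ gfunPersp t M := by
    calc s = (M - (1 + π) * |t|) / π := by field_simp; ring
      _ ≤ gfunPersp t M := sub_div_pi_le_gfunPersp htM
  obtain ⟨x, hx, hxs⟩ := intermediate_value_Icc htM
    (continuousOn_gfunPersp.mono Icc_subset_Ici_self) ⟨(gfunPersp_abs t).trans_le hs, hsM⟩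
  exact ⟨x, hx.1, hxs⟩

end gfunPersp

def IsGraphScale (p : ℝ × ℝ) (lam : ℝ) : Prop :=
  0 < lam ∧ -1 ≤ p.1 / lam ∧ p.1 / lam ≤ 1 ∧ p.2 / lam = gfun (p.1 / lam)

section IsGraphScale

variable {p : ℝ × ℝ} {lam : ℝ}

lemma isGraphScale_iff :
    IsGraphScale p lam ↔ 0 < lam ∧ |p.1| ≤ lam ∧ gfunPersp p.1 lam = p.2 := by
  refine and_congr_right fun hlam => ?_
  rw [← and_assoc, ← abs_le, abs_div, abs_of_pos hlam, div_le_one hlam, gfunPersp,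
    div_eq_iff hlam.ne', mul_comm, eq_comm]

lemma IsGraphScale.eq {mu : ℝ} (hlam : IsGraphScale p lam) (hmu : IsGraphScale p mu) :
    lam = mu := by
  rw [isGraphScale_iff] at hlam hmu
  exact strictMonoOn_gfunPersp.injOn hlam.2.1 hmu.2.1 (hlam.2.2.trans hmu.2.2.symm)

lemma exists_isGraphScale (hp : p ∈ Scone) (hp0 : p ≠ 0) : ∃ lam, IsGraphScale p lam := by
  obtain ⟨x, htx, hx⟩ := exists_gfunPersp_eq hp
  have hx0 : 0 < x := ((abs_nonneg _).trans htx).lt_of_ne fun hx0 => hp0 <| by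
    subst hx0
    ext
    · exact abs_nonpos_iff.1 htx
    · simp [← hx, gfunPersp]
  exact ⟨x, isGraphScale_iff.2 ⟨hx0, htx, hx⟩⟩

lemma IsGraphScale.smul (h : IsGraphScale p lam) {c : ℝ} (hc : 0 < c) :
    IsGraphScale (c • p) (c * lam) := by
  have hdiv (a : ℝ) : c * a / (c * lam) = a / lam := mul_div_mul_left a lam hc.ne'
  obtain ⟨hlam, h1, h2, h3⟩ := h
  simp only [IsGraphScale, Prod.smul_fst, Prod.smul_snd, smul_eq_mul, hdiv]
  exact ⟨mul_pos hc hlam, h1, h2, h3⟩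

end IsGraphScale

lemma isGraphScale_graph {u : ℝ} (hu1 : -1 ≤ u) (hu2 : u ≤ 1) :
    IsGraphScale (u, gfun u) 1 := by
  simp [IsGraphScale, hu1, hu2]

/-- The infimum only picks out the unique scale (`IsGraphScale.eq`); outside `Scone \ {0}` the
set is empty and the value is the junk `sInf ∅ = 0`. -/
noncomputable def graphGauge (p : ℝ × ℝ) : ℝ := sInf {lam | IsGraphScale p lam}

lemma IsGraphScale.graphGauge_eq {p : ℝ × ℝ} {lam : ℝ} (h : IsGraphScale p lam) :
    graphGauge p = lam := by
  rw [graphGauge, show {mu | IsGraphScale p mu} = {lam} from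
    Set.eq_singleton_iff_unique_mem.2 ⟨h, fun _ hmu => hmu.eq h⟩, csInf_singleton]

theorem rays_meet_graph_once :
    (∀ p : ℝ × ℝ, p ∈ Scone → p ≠ 0 →
      ∃! lam : ℝ, 0 < lam ∧ -1 ≤ p.1 / lam ∧ p.1 / lam ≤ 1 ∧ p.2 / lam = gfun (p.1 / lam)) ∧
    ∃ F : ℝ × ℝ → ℝ,
      (∀ p ∈ Scone \ {(0 : ℝ × ℝ)}, 0 < F p) ∧
      (∀ p ∈ Scone \ {(0 : ℝ × ℝ)}, ∀ c : ℝ, 0 < c → F (c • p) = c * F p) ∧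
      (∀ u : ℝ, -1 ≤ u → u ≤ 1 → F (u, gfun u) = 1) := by
  refine ⟨fun p hp hp0 => ?_, graphGauge, ?_, ?_, ?_⟩
  · obtain ⟨lam, h⟩ := exists_isGraphScale hp hp0
    exact ⟨lam, h, fun _ hmu => IsGraphScale.eq hmu h⟩
  · rintro p ⟨hp, hp0⟩
    obtain ⟨lam, h⟩ := exists_isGraphScale hp hp0
    rw [h.graphGauge_eq]
    exact h.1
  · rintro p ⟨hp, hp0⟩ c hc
    obtain ⟨lam, h⟩ := exists_isGraphScale hp hp0
    rw [(h.smul hc).graphGauge_eq, h.graphGauge_eq]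
  · intro u hu1 hu2
    exact (isGraphScale_graph hu1 hu2).graphGauge_eq
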